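/- arXiv:0911.3993 — 6 statements merged into one kernel-verified Lean document; each statement's English description precedes it below -/
import Mathlib

section
/- Let ρ : g → gl(V) be a representation and let Φ : V_m → K be a smooth function which does not depend on the last component, i.e. Φ(f_0, …, f_m) = θ(f_0, …, f_{m-1}) for a smooth function θ on V_{m-1}. Then Φ is g_m-invariant on V_m if and only if θ is g_{m-1}-invariant on V_{m-1}. -/
open Finset

attribute [local instance 100] LieRing.ofAssociativeRing

/-- The Takiff representation `ρ_m` of `g_m` on `V_m`:
`(ρ_m(X)F)_k = ∑_{r+s=k} ρ(x_r)(f_s)`. -/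
def takiffRep {g V : Type*} [LieRing g] [LieAlgebra ℝ g]
    [AddCommGroup V] [Module ℝ V] (ρ : g →ₗ⁅ℝ⁆ Module.End ℝ V) {m : ℕ}
    (X : Fin (m + 1) → g) (F : Fin (m + 1) → V) : Fin (m + 1) → V :=
  fun k => ∑ r : Fin (m + 1), if (r : ℕ) ≤ (k : ℕ) then ρ (X r) (F (k - r)) else 0

/-! The first `n + 1` components of `ρ_{n+1}(X)F` only involve those of `X` and `F`, so the
curve `t ↦ F + t ρ_{n+1}(X)F` truncates to the corresponding curve in `V_n`. Conversely, data in
`V_n` is the truncation of its extension by zero. -/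

theorem init_takiffRep {g V : Type*} [LieRing g] [LieAlgebra ℝ g] [AddCommGroup V] [Module ℝ V]
    (ρ : g →ₗ⁅ℝ⁆ Module.End ℝ V) {n : ℕ} (X : Fin (n + 2) → g) (F : Fin (n + 2) → V) :
    Fin.init (takiffRep ρ X F) = takiffRep ρ (Fin.init X) (Fin.init F) := by
  funext i
  simp only [Fin.init, takiffRep]
  have hlast : ¬ (Fin.last (n + 1) : ℕ) ≤ i.castSucc := by
    simp only [Fin.val_last, Fin.val_castSucc]
    omega
  rw [Fin.sum_univ_castSucc, if_neg hlast, add_zero]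
  refine Finset.sum_congr rfl fun r _ => ?_
  by_cases hr : (r : ℕ) ≤ i
  · simp only [Fin.val_castSucc, if_pos hr,
      Fin.sub_castSucc_eq_castSucc_sub_of_le (Fin.le_def.2 hr)]
  · simp only [Fin.val_castSucc, if_neg hr]

theorem takiff_invariance_of_truncation_general {g V : Type*} [LieRing g] [LieAlgebra ℝ g]
    [NormedAddCommGroup V] [NormedSpace ℝ V]
    (ρ : g →ₗ⁅ℝ⁆ Module.End ℝ V) (n : ℕ)
    (Φ : (Fin (n + 2) → V) → ℝ) (θ : (Fin (n + 1) → V) → ℝ)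
    (h : ∀ F : Fin (n + 2) → V, Φ F = θ (fun i => F i.castSucc)) :
    (∀ (X : Fin (n + 2) → g) (F : Fin (n + 2) → V),
        deriv (fun t : ℝ => Φ (F + t • takiffRep ρ X F)) 0 = 0) ↔
    (∀ (X : Fin (n + 1) → g) (F : Fin (n + 1) → V),
        deriv (fun t : ℝ => θ (F + t • takiffRep ρ X F)) 0 = 0) := by
  have hcurve (X : Fin (n + 2) → g) (F : Fin (n + 2) → V) :
      (fun t : ℝ => Φ (F + t • takiffRep ρ X F)) =
        fun t : ℝ => θ (Fin.init F + t • takiffRep ρ (Fin.init X) (Fin.init F)) := by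
    simp only [h, ← init_takiffRep]
    rfl
  constructor
  · intro hΦ X F
    simpa only [hcurve, Fin.init_snoc] using hΦ (Fin.snoc X 0) (Fin.snoc F 0)
  · intro hθ X F
    rw [hcurve]
    exact hθ _ _

/-- If a smooth function `Φ` on `V_m` does not depend on the last component,
i.e. `Φ(f_0, …, f_m) = θ(f_0, …, f_{m-1})`, then `Φ` is `g_m`-invariant if and
only if `θ` is `g_{m-1}`-invariant (here `m = n + 1`). -/
theorem takiff_invariance_of_truncation {g V : Type*} [LieRing g] [LieAlgebra ℝ g]
    [NormedAddCommGroup V] [NormedSpace ℝ V] [FiniteDimensional ℝ V]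
    (ρ : g →ₗ⁅ℝ⁆ Module.End ℝ V) (n : ℕ)
    (Φ : (Fin (n + 2) → V) → ℝ) (θ : (Fin (n + 1) → V) → ℝ)
    (hΦ : ContDiff ℝ (⊤ : ℕ∞) Φ) (hθ : ContDiff ℝ (⊤ : ℕ∞) θ)
    (h : ∀ F : Fin (n + 2) → V, Φ F = θ (fun i => F i.castSucc)) :
    (∀ (X : Fin (n + 2) → g) (F : Fin (n + 2) → V),
        deriv (fun t : ℝ => Φ (F + t • takiffRep ρ X F)) 0 = 0) ↔
    (∀ (X : Fin (n + 1) → g) (F : Fin (n + 1) → V),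
        deriv (fun t : ℝ => θ (F + t • takiffRep ρ X F)) 0 = 0) :=
  takiff_invariance_of_truncation_general ρ n Φ θ h
end

section
/- Let ρ : g → gl(V) be a representation and φ : V → K a smooth g-invariant function (meaning (d/dt)|_{t=0} φ(v + t ρ(x)v) = 0 for all x ∈ g, v ∈ V). Then for every 0 ≤ k ≤ m, the function Φ_k(f_0,…,f_m) = (1/k!)(d/dt)^k|_{t=0} φ(∑_j t^j f_j) is g_m-invariant on V_m, i.e. (d/ds)|_{s=0} Φ_k(F + s ρ_m(X)F) = 0 for all X ∈ g_m, F ∈ V_m. -/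
/-!
Write `V(t) = ∑ tʲ fⱼ`, `P(t) = ∑ tʳ xᵣ` and `W(t) = ∑ tᵏ (ρ_m(X)F)ₖ`. Since `ρ_m` is `ρ` acting
on `V[t]` truncated modulo `t^(m+1)`, `W(t) = ρ(P(t)) V(t) - t^(m+1) R(t)` with `R` polynomial.
With `ψ(s, t) = φ(V(t) + s W(t))` the quantity to compute is `∂ₛ ∂ₜᵏ ψ (0, 0) / k!`.
Exchanging the partial derivatives, it is `∂ₜᵏ` at `0` of `∂ₛψ(0, t) = dφ_{V(t)} W(t)`, and
invariance of `φ` kills the term `dφ_{V(t)} ρ(P(t)) V(t)`. What remains is `t^(m+1)` times a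
smooth function, whose derivatives of order `k ≤ m` vanish at `0`.
-/

open Finset

attribute [local instance 100] LieRing.ofAssociativeRing

open scoped ContDiff

section DirectionalDerivative

variable {E F : Type*} [NormedAddCommGroup E] [NormedSpace ℝ E]
  [NormedAddCommGroup F] [NormedSpace ℝ F]

noncomputable def dirDeriv (v : E) (f : E → F) : E → F := fun x => fderiv ℝ f x v

theorem contDiff_dirDeriv {f : E → F} (hf : ContDiff ℝ ∞ f) (v : E) :
    ContDiff ℝ ∞ (dirDeriv v f) :=
  (hf.fderiv_right (by simp)).clm_apply contDiff_const

theorem contDiff_iterate_dirDeriv {f : E → F} (hf : ContDiff ℝ ∞ f) (v : E) (k : ℕ) :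
    ContDiff ℝ ∞ ((dirDeriv v)^[k] f) := by
  induction k generalizing f with
  | zero => exact hf
  | succ k ih => exact ih (contDiff_dirDeriv hf v)

theorem dirDeriv_comm {f : E → F} (hf : ContDiff ℝ 2 f) (v w : E) :
    dirDeriv v (dirDeriv w f) = dirDeriv w (dirDeriv v f) := by
  funext x
  have hf' : Differentiable ℝ (fderiv ℝ f) :=
    (hf.fderiv_right (m := 1) (by norm_num)).differentiable (by simp)
  have second : ∀ a b, dirDeriv a (dirDeriv b f) x = fderiv ℝ (fderiv ℝ f) x a b := fun a b => by
    change fderiv ℝ (fun y => fderiv ℝ f y b) x a = _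
    simp [fderiv_clm_apply (hf' x) (differentiableAt_const b)]
  rw [second, second, hf.contDiffAt.isSymmSndFDerivAt (by simp) v w]

theorem dirDeriv_iterate_comm {f : E → F} (hf : ContDiff ℝ ∞ f) (v w : E) (k : ℕ) :
    dirDeriv v ((dirDeriv w)^[k] f) = (dirDeriv w)^[k] (dirDeriv v f) := by
  induction k generalizing f with
  | zero => rfl
  | succ k ih =>
    rw [Function.iterate_succ_apply, Function.iterate_succ_apply, ih (contDiff_dirDeriv hf w),
      dirDeriv_comm (hf.of_le ENat.LEInfty.out)]

theorem hasDerivAt_comp_add_smul {f : E → F} (hf : Differentiable ℝ f) (x v : E) (t : ℝ) :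
    HasDerivAt (fun t : ℝ => f (x + t • v)) (dirDeriv v f (x + t • v)) t := by
  simpa [Function.comp_def, dirDeriv] using (hf (x + t • v)).hasFDerivAt.comp_hasDerivAt t
    (((hasDerivAt_id t).smul_const v).const_add x)

theorem iteratedDeriv_comp_add_smul {f : E → F} (hf : ContDiff ℝ ∞ f) (x v : E) (k : ℕ) :
    iteratedDeriv k (fun t : ℝ => f (x + t • v)) = fun t => (dirDeriv v)^[k] f (x + t • v) := by
  induction k generalizing f with
  | zero => rw [iteratedDeriv_zero]; rfl
  | succ k ih =>
    have hderiv : deriv (fun t : ℝ => f (x + t • v)) = fun t => dirDeriv v f (x + t • v) :=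
      funext fun t => (hasDerivAt_comp_add_smul (hf.differentiable (by simp)) x v t).deriv
    rw [iteratedDeriv_succ', hderiv, ih (contDiff_dirDeriv hf v), Function.iterate_succ_apply]

theorem deriv_iteratedDeriv_comm {f : E → F} (hf : ContDiff ℝ ∞ f) (x v w : E) (k : ℕ) :
    deriv (fun s : ℝ => iteratedDeriv k (fun t : ℝ => f (x + s • v + t • w)) 0) 0 =
      iteratedDeriv k (fun t : ℝ => dirDeriv v f (x + t • w)) 0 := by
  have hdiff := (contDiff_iterate_dirDeriv hf w k).differentiable (by simp)
  simp_rw [iteratedDeriv_comp_add_smul hf, zero_smul, add_zero]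
  rw [(hasDerivAt_comp_add_smul hdiff x v 0).deriv, dirDeriv_iterate_comm hf,
    iteratedDeriv_comp_add_smul (contDiff_dirDeriv hf v)]
  simp

end DirectionalDerivative

theorem iteratedDeriv_pow_mul_eq_zero {𝕜 : Type*} [NontriviallyNormedField 𝕜] {n k : ℕ}
    (hk : k < n) {h : 𝕜 → 𝕜} (hh : ContDiffAt 𝕜 k h 0) :
    iteratedDeriv k (fun t => t ^ n * h t) 0 = 0 := by
  rw [iteratedDeriv_fun_mul (by fun_prop) hh]
  refine sum_eq_zero fun i hi => ?_
  rw [iteratedDeriv_fun_pow_zero, if_neg ((Nat.lt_succ_iff.mp (mem_range.mp hi)).trans_lt hk).ne]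
  simp

section Takiff

variable {g V : Type*} [LieRing g] [LieAlgebra ℝ g] [AddCommGroup V] [Module ℝ V]
  (ρ : g →ₗ⁅ℝ⁆ Module.End ℝ V) {m : ℕ} (X : Fin (m + 1) → g) (F : Fin (m + 1) → V)

theorem sum_pow_smul_takiffRep (t : ℝ) :
    ∑ k : Fin (m + 1), t ^ (k : ℕ) • takiffRep ρ X F k =
      ∑ r : Fin (m + 1), ∑ s : Fin (m + 1),
        if (r : ℕ) + s ≤ m then t ^ ((r : ℕ) + s) • ρ (X r) (F s) else 0 := by
  simp only [takiffRep, smul_sum, smul_ite, smul_zero]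
  rw [sum_comm]
  refine sum_congr rfl fun r _ => (Fintype.sum_equiv (Equiv.addRight r) _ _ fun s => ?_).symm
  have hr : (r : ℕ) ≤ (s + r : Fin (m + 1)) ↔ (r : ℕ) + s ≤ m := by
    rw [Fin.val_add_eq_ite]; split_ifs <;> omega
  simp only [Equiv.coe_addRight, add_sub_cancel_right, hr]
  split_ifs with h
  · rw [Fin.val_add_eq_of_add_lt (by omega), add_comm]
  · rfl

noncomputable def takiffRemainder (t : ℝ) : V :=
  ∑ r : Fin (m + 1), ∑ s ∈ univ.filter fun s : Fin (m + 1) => m < (r : ℕ) + s,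
    t ^ ((r : ℕ) + s - (m + 1)) • ρ (X r) (F s)

theorem sum_pow_smul_takiffRep_eq (t : ℝ) :
    ∑ k : Fin (m + 1), t ^ (k : ℕ) • takiffRep ρ X F k =
      ρ (∑ r : Fin (m + 1), t ^ (r : ℕ) • X r) (∑ s : Fin (m + 1), t ^ (s : ℕ) • F s) -
        t ^ (m + 1) • takiffRemainder ρ X F t := by
  have hexpand : ρ (∑ r : Fin (m + 1), t ^ (r : ℕ) • X r) (∑ s : Fin (m + 1), t ^ (s : ℕ) • F s) =
      ∑ r : Fin (m + 1), ∑ s : Fin (m + 1), t ^ ((r : ℕ) + s) • ρ (X r) (F s) := by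
    simp only [map_sum, map_smul, LinearMap.coe_sum, Finset.sum_apply, LinearMap.smul_apply,
      smul_sum, smul_smul, pow_add]
    rw [sum_comm]
    simp only [mul_comm]
  rw [sum_pow_smul_takiffRep, hexpand, takiffRemainder, eq_sub_iff_add_eq]
  simp only [sum_filter, smul_sum, ← sum_add_distrib, smul_ite, smul_zero, smul_smul, ← pow_add]
  refine sum_congr rfl fun r _ => sum_congr rfl fun s _ => ?_
  split_ifs with hle hgt hgt
  · omega
  · rw [add_zero]
  · rw [zero_add, Nat.add_sub_cancel' hgt]
  · omega

end Takiff

section NormedTakiff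

variable {g V : Type*} [LieRing g] [LieAlgebra ℝ g] [NormedAddCommGroup V] [NormedSpace ℝ V]
  (ρ : g →ₗ⁅ℝ⁆ Module.End ℝ V) {m : ℕ} (X : Fin (m + 1) → g) (F : Fin (m + 1) → V)

theorem contDiff_takiffRemainder {n : WithTop ℕ∞} : ContDiff ℝ n (takiffRemainder ρ X F) := by
  unfold takiffRemainder
  fun_prop

theorem fderiv_apply_sum_pow_smul_takiffRep {φ : V → ℝ} (hφ : Differentiable ℝ φ)
    (hinv : ∀ (x : g) (v : V), deriv (fun t : ℝ => φ (v + t • ρ x v)) 0 = 0) (t : ℝ) :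
    fderiv ℝ φ (∑ j : Fin (m + 1), t ^ (j : ℕ) • F j)
        (∑ k : Fin (m + 1), t ^ (k : ℕ) • takiffRep ρ X F k) =
      t ^ (m + 1) * -fderiv ℝ φ (∑ j : Fin (m + 1), t ^ (j : ℕ) • F j)
        (takiffRemainder ρ X F t) := by
  have hinv' : ∀ (x : g) (v : V), fderiv ℝ φ v (ρ x v) = 0 := fun x v =>
    (hφ v).lineDeriv_eq_fderiv.symm.trans (hinv x v)
  rw [sum_pow_smul_takiffRep_eq, map_sub, hinv', map_smul, smul_eq_mul]
  ring

end NormedTakiff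

theorem taylor_coeff_takiff_invariant_general {g V : Type*} [LieRing g] [LieAlgebra ℝ g]
    [NormedAddCommGroup V] [NormedSpace ℝ V]
    (ρ : g →ₗ⁅ℝ⁆ Module.End ℝ V)
    (φ : V → ℝ) (hφ : ContDiff ℝ (⊤ : ℕ∞) φ)
    (hinv : ∀ (x : g) (v : V), deriv (fun t : ℝ => φ (v + t • ρ x v)) 0 = 0)
    (m k : ℕ) (hk : k ≤ m) :
    ∀ (X : Fin (m + 1) → g) (F : Fin (m + 1) → V),
      deriv (fun s : ℝ =>
        (k.factorial : ℝ)⁻¹ *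
          iteratedDeriv k
            (fun t : ℝ => φ (∑ j : Fin (m + 1), t ^ (j : ℕ) • (F + s • takiffRep ρ X F) j))
            0) 0 = 0 := by
  intro X F
  set Vt : ℝ → V := fun t => ∑ j : Fin (m + 1), t ^ (j : ℕ) • F j
  set Wt : ℝ → V := fun t => ∑ j : Fin (m + 1), t ^ (j : ℕ) • takiffRep ρ X F j
  set ψ : ℝ × ℝ → ℝ := fun p => φ (Vt p.2 + p.1 • Wt p.2)
  have hφd : Differentiable ℝ φ := hφ.differentiable (by simp)
  have hψ : ContDiff ℝ ∞ ψ := by fun_prop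
  have hslice : ∀ s t : ℝ, φ (∑ j : Fin (m + 1), t ^ (j : ℕ) • (F + s • takiffRep ρ X F) j) =
      ψ (0 + s • (1, 0) + t • (0, 1)) := fun s t => by
    simp [ψ, Vt, Wt, smul_add, sum_add_distrib, smul_sum, smul_comm s]
  have hdir : ∀ t : ℝ, dirDeriv (1, 0) ψ (0 + t • (0, 1)) =
      t ^ (m + 1) * -fderiv ℝ φ (Vt t) (takiffRemainder ρ X F t) := fun t =>
    calc dirDeriv (1, 0) ψ (0 + t • (0, 1)) = lineDeriv ℝ ψ (0, t) (1, 0) := by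
          simp [dirDeriv, (hψ.differentiable (by simp) (0, t)).lineDeriv_eq_fderiv]
      _ = fderiv ℝ φ (Vt t) (Wt t) := by
          rw [← (hφd _).lineDeriv_eq_fderiv]; simp [lineDeriv, ψ]
      _ = _ := fderiv_apply_sum_pow_smul_takiffRep ρ X F hφd hinv t
  have hrem : ContDiff ℝ ∞ fun t => -fderiv ℝ φ (Vt t) (takiffRemainder ρ X F t) :=
    (((hφ.fderiv_right (by simp)).comp (by fun_prop)).clm_apply
      (contDiff_takiffRemainder ρ X F)).neg
  simp_rw [hslice, deriv_const_mul_field', deriv_iteratedDeriv_comm hψ, hdir]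
  rw [iteratedDeriv_pow_mul_eq_zero (by omega) (hrem.contDiffAt.of_le (mod_cast le_top)), mul_zero]

/-- If `φ` is a smooth `g`-invariant function on `V`, then for every `0 ≤ k ≤ m`
the Taylor coefficient `Φ_k(f_0,…,f_m) = (1/k!)(d/dt)^k|₀ φ(∑_j t^j f_j)` is a
`g_m`-invariant function on `V_m`. -/
theorem taylor_coeff_takiff_invariant {g V : Type*} [LieRing g] [LieAlgebra ℝ g]
    [NormedAddCommGroup V] [NormedSpace ℝ V] [FiniteDimensional ℝ V]
    (ρ : g →ₗ⁅ℝ⁆ Module.End ℝ V)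
    (φ : V → ℝ) (hφ : ContDiff ℝ (⊤ : ℕ∞) φ)
    (hinv : ∀ (x : g) (v : V), deriv (fun t : ℝ => φ (v + t • ρ x v)) 0 = 0)
    (m k : ℕ) (hk : k ≤ m) :
    ∀ (X : Fin (m + 1) → g) (F : Fin (m + 1) → V),
      deriv (fun s : ℝ =>
        (k.factorial : ℝ)⁻¹ *
          iteratedDeriv k
            (fun t : ℝ => φ (∑ j : Fin (m + 1), t ^ (j : ℕ) • (F + s • takiffRep ρ X F) j))
            0) 0 = 0 :=
  taylor_coeff_takiff_invariant_general ρ φ hφ hinv m k hk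
end

section
/- The map θ(f_0, …, f_m) = (f_m, …, f_0) on (g*)^{m+1} is an involution (θ ∘ θ = id), and consequently the Takiff extension (ad*)_m of the coadjoint representation of g is equivalent (as a representation of g_m) to the coadjoint representation (ad_m)* of the Takiff algebra g_m. -/
/-!
Reversing the order of the components turns the lower-triangular Takiff pattern `F (k - r)`,
`r ≤ k`, of `(ad*)_m` into the pattern `G (k + r)`, `k + r ≤ m`, of `(ad_m)*`, because
`rev (rev k - r) = k + r` in `Fin (m + 1)` and `r ≤ rev k ↔ k + r ≤ m`. So the involution `θ`
intertwines the two representations.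
-/

open Finset

variable {K : Type*} [Field K] {g : Type*} [LieRing g] [LieAlgebra K g]

/-- The coadjoint action `ad*(x) f = -(f ∘ ad x)` of `g` on `g*`. -/
def coad (K : Type*) [Field K] (g : Type*) [LieRing g] [LieAlgebra K g] (x : g) :
    Module.Dual K g →ₗ[K] Module.Dual K g :=
  -(LieAlgebra.ad K g x).dualMap

/-- The Takiff extension `(ad*)_m` of the coadjoint representation, acting on `(g*)^{m+1}`. -/
def coadTakiff {m : ℕ} (X : Fin (m + 1) → g) (F : Fin (m + 1) → Module.Dual K g) :
    Fin (m + 1) → Module.Dual K g :=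
  fun k => ∑ r : Fin (m + 1), if (r : ℕ) ≤ (k : ℕ) then coad K g (X r) (F (k - r)) else 0

/-- The coadjoint representation `(ad_m)*` of the Takiff algebra `g_m` on its dual,
identified with `(g*)^{m+1}`. -/
def takiffCoadjoint {m : ℕ} (X : Fin (m + 1) → g) (G : Fin (m + 1) → Module.Dual K g) :
    Fin (m + 1) → Module.Dual K g :=
  fun k => ∑ i : Fin (m + 1), if (k : ℕ) + (i : ℕ) ≤ m then coad K g (X i) (G (k + i)) else 0

/-- The order-reversal map `θ(f_0,…,f_m) = (f_m,…,f_0)` on `(g*)^{m+1}`. -/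
def revMap {m : ℕ} (F : Fin (m + 1) → Module.Dual K g) : Fin (m + 1) → Module.Dual K g :=
  fun k => F k.rev

open Function

theorem revMap_involutive (m : ℕ) :
    Involutive (revMap : (Fin (m + 1) → Module.Dual K g) → Fin (m + 1) → Module.Dual K g) :=
  fun F => funext fun k => congrArg F k.rev_rev

def revLinearMap (m : ℕ) :
    (Fin (m + 1) → Module.Dual K g) →ₗ[K] Fin (m + 1) → Module.Dual K g where
  toFun := revMap
  map_add' _ _ := rfl
  map_smul' _ _ := rfl

-- `LinearEquiv.ofInvolutive` takes `θ` itself as the inverse, so `.symm` also unfolds to `revMap`.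
def revLinearEquiv (m : ℕ) :
    (Fin (m + 1) → Module.Dual K g) ≃ₗ[K] Fin (m + 1) → Module.Dual K g :=
  LinearEquiv.ofInvolutive (revLinearMap m) (revMap_involutive m)

theorem Fin.val_le_val_rev_iff {m : ℕ} (k r : Fin (m + 1)) :
    (r : ℕ) ≤ k.rev ↔ (k : ℕ) + r ≤ m := by
  rw [Fin.val_rev]
  omega

theorem takiffCoadjoint_eq_revMap_coadTakiff {m : ℕ} (X : Fin (m + 1) → g)
    (F : Fin (m + 1) → Module.Dual K g) :
    takiffCoadjoint X F = revMap (coadTakiff X (revMap F)) := by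
  funext k
  refine Finset.sum_congr rfl fun r _ => ?_
  simp only [revMap, Fin.val_le_val_rev_iff, Fin.rev_sub, Fin.rev_rev]

/-- The order-reversal map `θ` is an involution, and consequently the Takiff extension
`(ad*)_m` of the coadjoint representation of `g` is equivalent, as a representation of
`g_m`, to the coadjoint representation `(ad_m)*` of the Takiff algebra. -/
theorem revMap_involutive_and_equivalence (m : ℕ) :
    (∀ F : Fin (m + 1) → Module.Dual K g, revMap (revMap F) = F) ∧
    ∃ e : (Fin (m + 1) → Module.Dual K g) ≃ₗ[K] (Fin (m + 1) → Module.Dual K g),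
      ∀ (X : Fin (m + 1) → g) (F : Fin (m + 1) → Module.Dual K g),
        takiffCoadjoint X F = e (coadTakiff X (e.symm F)) :=
  ⟨revMap_involutive m, revLinearEquiv m, takiffCoadjoint_eq_revMap_coadTakiff⟩
end

section
/- Let g be a quadratic Lie algebra, i.e. g carries a nondegenerate symmetric bilinear form B which is invariant: B([x,y],z) = B(x,[y,z]). Then the generalized Takiff algebra g_m is also quadratic: the bilinear form B_m(∑ x_r T^r, ∑ y_s T^s) = ∑_{r+s=m} B(x_r, y_s) is symmetric, nondegenerate, and invariant on g_m. -/
/-!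
Symmetry and nondegeneracy of `B_m` are inherited coefficientwise from `B`: pairing `X` with
`y T^(m-r)` recovers `B(x_r, y)`. For invariance, both `B_m([X,Y], Z)` and `B_m(X, [Y,Z])` expand
to sums over the pairs `(r, s)` with `r + s ≤ m`, of `B([x_r, y_s], z_{m-r-s})` and
`B(x_r, [y_s, z_{m-r-s}])` respectively, which agree termwise by invariance of `B`.
-/

open Finset

/-- The Takiff bracket on `g_m`: `[X,Y]_k = ∑_{r+s=k} [x_r, y_s]`. -/
def takiffBracket {g : Type*} [LieRing g] (m : ℕ) (X Y : Fin (m + 1) → g) :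
    Fin (m + 1) → g :=
  fun k => ∑ r : Fin (m + 1), if (r : ℕ) ≤ (k : ℕ) then ⁅X r, Y (k - r)⁆ else 0

namespace Fin

lemma le_iff_val_add_val_sub_le {m : ℕ} (r k : Fin (m + 1)) :
    (r : ℕ) ≤ k ↔ (r : ℕ) + ((k - r : Fin (m + 1)) : ℕ) ≤ m := by
  rcases le_or_gt r k with hrk | hkr
  · rw [coe_sub_iff_le.2 hrk]; omega
  · rw [coe_sub_iff_lt.2 hkr]; omega

lemma sum_ite_le_sub_eq_sum_ite_add_le {M : Type*} [AddCommMonoid M] {m : ℕ} (r : Fin (m + 1))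
    (f : Fin (m + 1) → Fin (m + 1) → M) :
    ∑ k : Fin (m + 1), (if (r : ℕ) ≤ k then f (k - r) k else 0) =
      ∑ s : Fin (m + 1), if (r : ℕ) + s ≤ m then f s (r + s) else 0 :=
  Fintype.sum_equiv (Equiv.subRight r) _ _ fun k => by
    simp only [Equiv.subRight_apply, add_sub_cancel, le_iff_val_add_val_sub_le r k]

end Fin

section TakiffForm

variable {R M N : Type*} [CommSemiring R] [AddCommMonoid M] [Module R M] [AddCommMonoid N]
  [Module R N]

/-- `Y r.rev` is the coefficient `y_{m-r}`, so this is `B_m(X, Y) = ∑_{r+s=m} B(x_r, y_s)`. -/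
def takiffForm (B : M →ₗ[R] M →ₗ[R] N) (m : ℕ) (X Y : Fin (m + 1) → M) : N :=
  ∑ r, B (X r) (Y r.rev)

lemma takiffForm_comm {B : M →ₗ[R] M →ₗ[R] N} (hB : ∀ x y, B x y = B y x) {m : ℕ} (X Y : Fin (m + 1) → M) :
    takiffForm B m X Y = takiffForm B m Y X := by
  unfold takiffForm
  calc ∑ r, B (X r) (Y r.rev) = ∑ r, B (Y r.rev) (X r) := by simp only [hB]
    _ = ∑ r, B (Y r) (X r.rev) := Fintype.sum_equiv Fin.revPerm _ _ (by simp)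

lemma takiffForm_single_rev (B : M →ₗ[R] M →ₗ[R] N) {m : ℕ}
    (X : Fin (m + 1) → M) (r : Fin (m + 1)) (y : M) :
    takiffForm B m X (Pi.single r.rev y) = B (X r) y := by
  refine (Fintype.sum_eq_single r fun s hs => ?_).trans (by simp)
  rw [Pi.single_eq_of_ne (Fin.rev_injective.ne hs), map_zero]

lemma eq_zero_of_takiffForm_eq_zero {B : M →ₗ[R] M →ₗ[R] N}
    (hB : ∀ x, (∀ y, B x y = 0) → x = 0) {m : ℕ} {X : Fin (m + 1) → M}
    (hX : ∀ Y, takiffForm B m X Y = 0) : X = 0 :=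
  funext fun r => hB _ fun y => takiffForm_single_rev B X r y ▸ hX _

variable {L : Type*} [LieRing L] [Module R L] (B : L →ₗ[R] L →ₗ[R] N) {m : ℕ}

lemma takiffForm_takiffBracket_left (X Y Z : Fin (m + 1) → L) :
    takiffForm B m (takiffBracket m X Y) Z =
      ∑ r : Fin (m + 1), ∑ s : Fin (m + 1),
        if (r : ℕ) + s ≤ m then B ⁅X r, Y s⁆ (Z (r + s).rev) else 0 := by
  simp only [takiffForm, takiffBracket, map_sum, LinearMap.sum_apply,
    apply_ite (B ·), apply_ite DFunLike.coe, ite_apply, map_zero,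
    LinearMap.zero_apply]
  rw [sum_comm]
  exact sum_congr rfl fun r _ =>
    Fin.sum_ite_le_sub_eq_sum_ite_add_le r fun s k => B ⁅X r, Y s⁆ (Z k.rev)

lemma takiffForm_takiffBracket_right (X Y Z : Fin (m + 1) → L) :
    takiffForm B m X (takiffBracket m Y Z) =
      ∑ r : Fin (m + 1), ∑ s : Fin (m + 1),
        if (r : ℕ) + s ≤ m then B (X r) ⁅Y s, Z (r + s).rev⁆ else 0 := by
  simp only [takiffForm, takiffBracket, map_sum, apply_ite (B _), map_zero, ← Fin.rev_add]
  refine sum_congr rfl fun r _ => sum_congr rfl fun s _ => if_congr ?_ rfl rfl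
  rw [Fin.val_rev]
  omega

lemma takiffForm_takiffBracket {B : L →ₗ[R] L →ₗ[R] N} (hB : ∀ x y z, B ⁅x, y⁆ z = B x ⁅y, z⁆)
    (X Y Z : Fin (m + 1) → L) :
    takiffForm B m (takiffBracket m X Y) Z = takiffForm B m X (takiffBracket m Y Z) := by
  simp only [takiffForm_takiffBracket_left, takiffForm_takiffBracket_right, hB]

end TakiffForm

/-- If `g` is a quadratic Lie algebra with invariant nondegenerate symmetric form `B`,
then the form `B_m(X, Y) = ∑_{r+s=m} B(x_r, y_s)` on the generalized Takiff algebra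
`g_m` is symmetric, nondegenerate and invariant, so `g_m` is quadratic as well. -/
theorem takiff_quadratic {K : Type*} [Field K] {g : Type*} [LieRing g] [LieAlgebra K g]
    (B : g →ₗ[K] g →ₗ[K] K)
    (hsymm : ∀ x y : g, B x y = B y x)
    (hnd : ∀ x : g, (∀ y : g, B x y = 0) → x = 0)
    (hinv : ∀ x y z : g, B ⁅x, y⁆ z = B x ⁅y, z⁆) (m : ℕ) :
    (∀ X Y : Fin (m + 1) → g,
      ∑ r : Fin (m + 1), B (X r) (Y r.rev) = ∑ r : Fin (m + 1), B (Y r) (X r.rev)) ∧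
    (∀ X : Fin (m + 1) → g,
      (∀ Y : Fin (m + 1) → g, ∑ r : Fin (m + 1), B (X r) (Y r.rev) = 0) → X = 0) ∧
    (∀ X Y Z : Fin (m + 1) → g,
      ∑ r : Fin (m + 1), B (takiffBracket m X Y r) (Z r.rev) =
        ∑ r : Fin (m + 1), B (X r) (takiffBracket m Y Z r.rev)) :=
  ⟨takiffForm_comm hsymm, fun _ => eq_zero_of_takiffForm_eq_zero hnd,
    takiffForm_takiffBracket hinv⟩
end

section
/- Let a : ℝ^n → ℝ^n be a polynomial vector field such that ∑_i a_i(x) x_i = 0 identically. Then there exist polynomial functions b_{ij} on ℝ^n with b_{ij} = -b_{ji} such that a_i(x) = ∑_j b_{ij}(x) x_j for all x and all i. Equivalently, a is a combination, with polynomial coefficients, of the rotational vector fields x_j ∂/∂x_i - x_i ∂/∂x_j. -/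
/-!
Induct on `n`. Setting `x₀ = 0` in `∑ aᵢ xᵢ = 0` gives the same relation in the remaining
variables, so by induction `aᵢ ≡ ∑_{j ≥ 1} bᵢⱼ xⱼ (mod x₀)` for `i ≥ 1` with `b` alternating.
Writing `aᵢ = x₀ cᵢ + ∑_{j ≥ 1} bᵢⱼ xⱼ`, the alternating part contributes nothing to `∑ aᵢ xᵢ`,
so `x₀ (a₀ + ∑ cᵢ xᵢ) = 0`; as `x₀` is a non-zero-divisor, `a₀ = -∑ cᵢ xᵢ`, and the matrix `b`
bordered by the column `c` and the row `-c` does the job. Carrying the diagonal condition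
`bᵢᵢ = 0` through the induction makes the argument work over any commutative ring.
-/

open Finset MvPolynomial

theorem Finset.sum_sum_eq_zero_of_alternating {ι M : Type*} [Fintype ι] [AddCommGroup M]
    (m : ι → ι → M) (hanti : ∀ i j, m i j = -m j i) (hdiag : ∀ i, m i i = 0) :
    ∑ i, ∑ j, m i j = 0 := by
  rw [← Fintype.sum_prod_type']
  refine sum_ninvolution Prod.swap (fun p => ?_) (fun p hp hfix => hp ?_) (fun _ => mem_univ _)
    Prod.swap_swap
  · rw [Prod.fst_swap, Prod.snd_swap, hanti p.1 p.2, neg_add_cancel]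
  · obtain ⟨i, j⟩ := p
    obtain rfl : j = i := congrArg Prod.fst hfix
    exact hdiag j

namespace MvPolynomial

variable {R : Type*} [CommRing R] {n : ℕ}

noncomputable def evalFirstZero : MvPolynomial (Fin (n + 1)) R →ₐ[R] MvPolynomial (Fin n) R :=
  aeval (Fin.cases 0 X)

@[simp]
theorem evalFirstZero_X_zero : evalFirstZero (X 0 : MvPolynomial (Fin (n + 1)) R) = 0 := by
  simp [evalFirstZero]

@[simp]
theorem evalFirstZero_X_succ (i : Fin n) :
    evalFirstZero (X i.succ : MvPolynomial (Fin (n + 1)) R) = X i := by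
  simp [evalFirstZero]

theorem X_zero_dvd_sub_rename_evalFirstZero (p : MvPolynomial (Fin (n + 1)) R) :
    X 0 ∣ p - rename Fin.succ (evalFirstZero p) := by
  induction p using MvPolynomial.induction_on with
  | C r => simp [evalFirstZero, algebraMap_eq]
  | add p q hp hq =>
    rw [map_add, map_add, add_sub_add_comm]
    exact dvd_add hp hq
  | mul_X p i hp =>
    have hX : X 0 ∣ X i - rename Fin.succ (evalFirstZero (X i : MvPolynomial _ R)) := by
      cases i using Fin.cases <;> simp
    have hsplit : p * X i - rename Fin.succ (evalFirstZero (p * X i)) =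
        (p - rename Fin.succ (evalFirstZero p)) * X i +
          rename Fin.succ (evalFirstZero p) * (X i - rename Fin.succ (evalFirstZero (X i))) := by
      rw [map_mul, map_mul]
      ring
    rw [hsplit]
    exact dvd_add (dvd_mul_of_dvd_left hp _) (dvd_mul_of_dvd_right hX _)

theorem exists_alternating_of_sum_mul_X_eq_zero (a : Fin n → MvPolynomial (Fin n) R)
    (h : ∑ i, a i * X i = 0) :
    ∃ b : Fin n → Fin n → MvPolynomial (Fin n) R,
      (∀ i j, b i j = -b j i) ∧ (∀ i, b i i = 0) ∧ ∀ i, a i = ∑ j, b i j * X j := by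
  induction n with
  | zero => exact ⟨0, by simp, by simp, finZeroElim⟩
  | succ n ih =>
    have h' : ∑ i, evalFirstZero (a i.succ) * X i = 0 := by
      simpa [Fin.sum_univ_succ] using congrArg evalFirstZero h
    obtain ⟨b', hanti, hdiag, hb'⟩ := ih _ h'
    have hdvd (i : Fin n) : X 0 ∣ a i.succ - ∑ j, rename Fin.succ (b' i j) * X j.succ := by
      simpa [hb' i] using X_zero_dvd_sub_rename_evalFirstZero (a i.succ)
    choose c hc using hdvd
    have hquad : ∑ i, ∑ j, rename Fin.succ (b' i j) * X j.succ * X i.succ = 0 :=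
      sum_sum_eq_zero_of_alternating _ (fun i j => by rw [hanti i j, map_neg]; ring)
        (fun i => by rw [hdiag i, map_zero, zero_mul, zero_mul])
    have hsum : ∑ i : Fin n, a i.succ * X i.succ = X 0 * ∑ i, c i * X i.succ +
        ∑ i, ∑ j, rename Fin.succ (b' i j) * X j.succ * X i.succ := by
      rw [mul_sum, ← sum_add_distrib]
      refine sum_congr rfl fun i _ => ?_
      rw [← sum_mul]
      linear_combination X i.succ * hc i
    have ha₀ : a 0 = -∑ i, c i * X i.succ := by
      have hX₀ : X 0 * (a 0 + ∑ i, c i * X i.succ) = X 0 * 0 := by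
        rw [Fin.sum_univ_succ] at h
        linear_combination h - hsum - hquad
      linear_combination X_mul_cancel_left_iff.mp hX₀
    refine ⟨Fin.cases (Fin.cases 0 (-c)) fun i => Fin.cases (c i) fun j => rename Fin.succ (b' i j),
      fun i j => ?_, fun i => ?_, fun i => ?_⟩
    · cases i using Fin.cases with
      | zero => cases j using Fin.cases <;> simp
      | succ i => cases j using Fin.cases with
        | zero => simp
        | succ j => simp [hanti i j]
    · cases i using Fin.cases <;> simp [hdiag]
    · cases i using Fin.cases with
      | zero => simp [Fin.sum_univ_succ, ha₀]
      | succ i =>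
        simp only [Fin.sum_univ_succ, Fin.cases_zero, Fin.cases_succ]
        linear_combination hc i

end MvPolynomial

/-- Dixmier property for the natural representation of `so(n)` on `ℝⁿ` in the polynomial
category: a polynomial vector field `a` with `∑_i a_i x_i = 0` is a combination, with
polynomial coefficients, of the rotational vector fields, i.e. `a_i = ∑_j b_{ij} x_j`
for an antisymmetric matrix `(b_{ij})` of polynomials. -/
theorem polynomial_field_annihilating_Q_is_rotational {n : ℕ}
    (a : Fin n → MvPolynomial (Fin n) ℝ)
    (h : ∑ i, a i * X i = 0) :
    ∃ b : Fin n → Fin n → MvPolynomial (Fin n) ℝ,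
      (∀ i j, b i j = -b j i) ∧ ∀ i, a i = ∑ j, b i j * X j := by
  obtain ⟨b, hanti, -, hb⟩ := exists_alternating_of_sum_mul_X_eq_zero a h
  exact ⟨b, hanti, hb⟩
end

section
/- Let ρ : g → gl(V) be a representation of a Lie algebra on a finite-dimensional space over ℝ, with all invariants and vector fields taken in the polynomial category. If (g, ρ, V) has the Dixmier property, then so does (g_m, ρ_m, V_m) for every m ≥ 0: every polynomial vector field with parameters a : W × V_m → V_m that annihilates all polynomial g_m-invariant functions on V_m can be written a(w, F) = ρ_m(b(w,F))(F) for some polynomial map b : W × V_m → g_m. -/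
open Finset

attribute [local instance 100] LieRing.ofAssociativeRing

/-- A map `f : ℝ^ι → M` is polynomial when it is a finite sum of real polynomial
functions times fixed vectors of `M`. -/
def IsPolynomialMap {ι : Type*} [Fintype ι] {M : Type*} [AddCommGroup M] [Module ℝ M]
    (f : (ι → ℝ) → M) : Prop :=
  ∃ (N : ℕ) (P : Fin N → MvPolynomial ι ℝ) (v : Fin N → M),
    ∀ x, f x = ∑ i, MvPolynomial.eval x (P i) • v i

/-- The polynomial Dixmier property for an action `σ` of `g` on `E = ℝ^ι`: every
polynomial vector field with parameters `a : W × E → E` (with `W = ℝ^w`) annihilating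
all polynomial `g`-invariant functions on `E` is of the form `a(w,e) = σ(b(w,e))(e)`
for a polynomial map `b : W × E → g`. -/
def HasPolyDixmier {g : Type*} [AddCommGroup g] [Module ℝ g] {ι : Type*} [Fintype ι]
    (σ : g → (ι → ℝ) → (ι → ℝ)) : Prop :=
  ∀ (w : ℕ) (a : ((Fin w ⊕ ι) → ℝ) → (ι → ℝ)), IsPolynomialMap a →
    (∀ φ : (ι → ℝ) → ℝ, IsPolynomialMap φ →
      (∀ (x : g) (e : ι → ℝ), deriv (fun t : ℝ => φ (e + t • σ x e)) 0 = 0) →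
      ∀ z, deriv (fun t : ℝ => φ ((fun i => z (Sum.inr i)) + t • a z)) 0 = 0) →
    ∃ b : ((Fin w ⊕ ι) → ℝ) → g, IsPolynomialMap b ∧
      ∀ z, a z = σ (b z) fun i => z (Sum.inr i)

/-- The Takiff representation `ρ_m` of `g_m` on `V_m = ℝ^{(m+1) × d}`:
`(ρ_m(X)F)_k = ∑_{r+s=k} ρ(x_r)(f_s)`. -/
def takiffRepAct {g : Type*} [LieRing g] [LieAlgebra ℝ g] {d m : ℕ}
    (ρ : g →ₗ⁅ℝ⁆ Module.End ℝ (Fin d → ℝ))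
    (X : Fin (m + 1) → g) (F : Fin (m + 1) × Fin d → ℝ) : Fin (m + 1) × Fin d → ℝ :=
  fun ki =>
    (∑ r : Fin (m + 1),
      if (r : ℕ) ≤ (ki.1 : ℕ) then ρ (X r) (fun j => F (ki.1 - r, j)) else 0) ki.2


/-!
Identify `V_m` with `V[u]/(u^{m+1})` through `F ↦ F(u) = ∑ f_s u^s`; then `ρ_m(X)F` is the
truncation of `∑ u^r ρ(x_r) F(u)`. For a polynomial `Q` on `V`, let `Q^{(K)}(F)` be the
coefficient of `u^K` in `Q(F(u))`. Its derivative along a field `A` is the `u^K`-coefficient of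
`∑_j A_j(u) ∂_jQ(F(u))`; in particular `Q^{(K)}` is `g_m`-invariant for `K ≤ m` when `Q` is
`g`-invariant.

Given a field `a` annihilating all `g_m`-invariants, `b = (b_0, …, b_m)` is built row by row.
If `b_0, …, b_{K-1}` already produce the rows `< K` of `a`, the defect `c = a_K - (ρ_m(b)F)_K`
satisfies `∑_j c_j ∂_jQ(f_0) = 0` for every `g`-invariant `Q`: compare the derivatives of
`Q^{(K)}` along `a` and along `ρ_m(b)F`. Treating `f_1, …, f_m` as extra parameters, the Dixmier
property of `ρ` gives a polynomial `b_K` with `c = ρ(b_K) f_0`, and putting `b_K` in slot `K`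
fixes row `K` without changing the earlier ones.
-/

namespace IsPolynomialMap

variable {ι : Type*} [Fintype ι] {M N P : Type*} [AddCommGroup M] [Module ℝ M]
  [AddCommGroup N] [Module ℝ N] [AddCommGroup P] [Module ℝ P]

theorem of_fintype_sum {α : Type*} [Fintype α] {f : (ι → ℝ) → M}
    (p : α → MvPolynomial ι ℝ) (v : α → M) (h : ∀ x, f x = ∑ i, MvPolynomial.eval x (p i) • v i) :
    IsPolynomialMap f := by
  let e := Fintype.equivFin α
  refine ⟨Fintype.card α, p ∘ e.symm, v ∘ e.symm, fun x => (h x).trans ?_⟩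
  exact Fintype.sum_equiv e _ _ fun i => by simp

theorem zero : IsPolynomialMap fun _ : ι → ℝ => (0 : M) :=
  ⟨0, Fin.elim0, Fin.elim0, by simp⟩

theorem add {f g : (ι → ℝ) → M} (hf : IsPolynomialMap f) (hg : IsPolynomialMap g) :
    IsPolynomialMap (f + g) := by
  obtain ⟨N₁, p₁, v₁, h₁⟩ := hf
  obtain ⟨N₂, p₂, v₂, h₂⟩ := hg
  exact of_fintype_sum (Sum.elim p₁ p₂) (Sum.elim v₁ v₂) fun x => by simp [h₁, h₂]

theorem comp_linearMap {f : (ι → ℝ) → M} (hf : IsPolynomialMap f) (L : M →ₗ[ℝ] N) :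
    IsPolynomialMap (L ∘ f) := by
  obtain ⟨n, p, v, h⟩ := hf
  exact ⟨n, p, L ∘ v, fun x => by simp [h]⟩

theorem sub {f g : (ι → ℝ) → M} (hf : IsPolynomialMap f) (hg : IsPolynomialMap g) :
    IsPolynomialMap (f - g) := by
  convert hf.add (hg.comp_linearMap (-LinearMap.id)) using 1
  funext x
  simp [sub_eq_add_neg]

theorem precomp {κ : Type*} [Fintype κ] {f : (ι → ℝ) → M} (hf : IsPolynomialMap f) (σ : ι → κ) :
    IsPolynomialMap fun z : κ → ℝ => f (z ∘ σ) := by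
  obtain ⟨n, p, v, h⟩ := hf
  exact ⟨n, fun i => MvPolynomial.rename σ (p i), v, fun z => by
    simp only [MvPolynomial.eval_rename]; exact h _⟩

theorem of_linearMap (L : (ι → ℝ) →ₗ[ℝ] M) : IsPolynomialMap L := by
  classical
  exact of_fintype_sum MvPolynomial.X (fun i => L fun j => if i = j then 1 else 0) fun x => by
    simpa using L.pi_apply_eq_sum_univ x

theorem bilinear {f : (ι → ℝ) → M} {g : (ι → ℝ) → N} (hf : IsPolynomialMap f)
    (hg : IsPolynomialMap g) (β : M →ₗ[ℝ] N →ₗ[ℝ] P) :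
    IsPolynomialMap fun x => β (f x) (g x) := by
  obtain ⟨N₁, p₁, v₁, h₁⟩ := hf
  obtain ⟨N₂, p₂, v₂, h₂⟩ := hg
  refine of_fintype_sum (fun ij : Fin N₁ × Fin N₂ => p₁ ij.1 * p₂ ij.2)
    (fun ij => β (v₁ ij.1) (v₂ ij.2)) fun x => ?_
  simp [h₁, h₂, map_sum, Fintype.sum_prod_type, Finset.smul_sum, smul_smul, mul_comm]
  exact Finset.sum_comm

theorem real_iff {f : (ι → ℝ) → ℝ} :
    IsPolynomialMap f ↔ ∃ Q : MvPolynomial ι ℝ, ∀ x, f x = MvPolynomial.eval x Q := by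
  constructor
  · rintro ⟨n, p, v, h⟩
    exact ⟨∑ i, MvPolynomial.C (v i) * p i, fun x => by simp [h, mul_comm]⟩
  · rintro ⟨Q, hQ⟩
    exact of_fintype_sum (fun _ : Unit => Q) (fun _ => 1) fun x => by simp [hQ]

end IsPolynomialMap

theorem HasPolyDixmier.exists_of_injective {g : Type*} [AddCommGroup g] [Module ℝ g]
    {ι : Type*} [Fintype ι] {σ : g → (ι → ℝ) → ι → ℝ} (hD : HasPolyDixmier σ)
    {κ : Type*} [Fintype κ] (π : ι → κ) (hπ : Function.Injective π)
    (c : (κ → ℝ) → ι → ℝ) (hc : IsPolynomialMap c)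
    (hann : ∀ φ : (ι → ℝ) → ℝ, IsPolynomialMap φ →
      (∀ (x : g) (e : ι → ℝ), deriv (fun t : ℝ => φ (e + t • σ x e)) 0 = 0) →
      ∀ z, deriv (fun t : ℝ => φ (z ∘ π + t • c z)) 0 = 0) :
    ∃ b : (κ → ℝ) → g, IsPolynomialMap b ∧ ∀ z, c z = σ (b z) (z ∘ π) := by
  classical
  let E : Fin (Fintype.card {k // k ∉ Set.range π}) ⊕ ι ≃ κ :=
    ((Fintype.equivFin _).symm.sumCongr (Equiv.ofInjective π hπ)).trans
      ((Equiv.sumComm _ _).trans (Equiv.sumCompl (· ∈ Set.range π)))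
  have hE : ∀ i, E (Sum.inr i) = π i := fun i => rfl
  obtain ⟨b, hb, hcb⟩ := hD _ (fun y => c (y ∘ E.symm)) (hc.precomp _) fun φ hφ hinv y => by
    simpa [Function.comp_def, ← hE] using hann φ hφ hinv (y ∘ E.symm)
  refine ⟨fun z => b (z ∘ E), hb.precomp _, fun z => ?_⟩
  simpa [Function.comp_def, hE] using hcb (z ∘ E)

open Polynomial Matrix

theorem hasDerivAt_coeff_aeval_add_smul {σ : Type*} [Fintype σ] (Q : MvPolynomial σ ℝ)
    (P V : σ → ℝ[X]) (t₀ : ℝ) (K : ℕ) :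
    HasDerivAt (fun t : ℝ => (MvPolynomial.aeval (P + t • V) Q).coeff K)
      ((∑ j, V j * MvPolynomial.aeval (P + t₀ • V) (MvPolynomial.pderiv j Q)).coeff K) t₀ := by
  classical
  induction Q using MvPolynomial.induction_on generalizing K with
  | C a => simpa using hasDerivAt_const t₀ _
  | add p q hp hq =>
    simpa [mul_add, Finset.sum_add_distrib] using (hp K).fun_add (hq K)
  | mul_X p n hp =>
    have hline : ∀ l, HasDerivAt (fun t : ℝ => (P n + t • V n).coeff l) ((V n).coeff l) t₀ := by
      intro l
      simpa using ((hasDerivAt_id t₀).mul_const ((V n).coeff l)).const_add ((P n).coeff l)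
    have hfun : (fun t : ℝ => (MvPolynomial.aeval (P + t • V) (p * MvPolynomial.X n)).coeff K) =
        fun t => ∑ x ∈ antidiagonal K,
          (MvPolynomial.aeval (P + t • V) p).coeff x.1 * (P n + t • V n).coeff x.2 := by
      funext t
      simp [coeff_mul]
    rw [hfun]
    refine (HasDerivAt.fun_sum fun x _ => (hp x.1).fun_mul (hline x.2)).congr_deriv ?_
    simp only [Finset.sum_add_distrib, ← coeff_mul, ← coeff_add]
    congr 1
    simp only [Finset.sum_mul, MvPolynomial.pderiv_mul, MvPolynomial.pderiv_X, map_add, map_mul,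
      MvPolynomial.aeval_X, mul_add, Finset.sum_add_distrib, Pi.add_apply, Pi.smul_apply]
    simp [Pi.single_apply, mul_assoc, mul_comm (MvPolynomial.aeval (P + t₀ • V) p)]

theorem deriv_coeff_aeval_add_smul {σ : Type*} [Fintype σ] (Q : MvPolynomial σ ℝ)
    (P V : σ → ℝ[X]) (K : ℕ) :
    deriv (fun t : ℝ => (MvPolynomial.aeval (P + t • V) Q).coeff K) 0 =
      (∑ j, V j * MvPolynomial.aeval P (MvPolynomial.pderiv j Q)).coeff K := by
  simpa using (hasDerivAt_coeff_aeval_add_smul Q P V 0 K).deriv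

theorem deriv_eval_add_smul {σ : Type*} [Fintype σ] (Q : MvPolynomial σ ℝ) (e v : σ → ℝ) :
    deriv (fun t : ℝ => MvPolynomial.eval (e + t • v) Q) 0 =
      ∑ j, v j * MvPolynomial.eval e (MvPolynomial.pderiv j Q) := by
  have hC : ∀ (x : σ → ℝ) (p : MvPolynomial σ ℝ),
      MvPolynomial.aeval (C ∘ x) p = C (MvPolynomial.eval x p) :=
    fun x p => MvPolynomial.aeval_algebraMap_apply (B := ℝ[X]) x p
  have hline : ∀ t : ℝ, C ∘ e + t • C ∘ v = C ∘ (e + t • v) := fun t => by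
    funext j
    simp [smul_C]
  have h := deriv_coeff_aeval_add_smul Q (C ∘ e) (C ∘ v) 0
  simp only [hline, hC, coeff_C_zero, finsetSum_coeff] at h
  simpa [coeff_C_mul] using h

theorem Matrix.coeff_map_C_mulVec {n : Type*} [Fintype n] (M : Matrix n n ℝ) (P : n → ℝ[X])
    (j : n) (k : ℕ) : ((M.map C *ᵥ P) j).coeff k = (M *ᵥ fun i => (P i).coeff k) j := by
  simp [mulVec, dotProduct, finsetSum_coeff]

theorem sum_mulVec_mul_aeval_pderiv_eq_zero {σ : Type*} [Fintype σ] {M : Matrix σ σ ℝ}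
    {Q : MvPolynomial σ ℝ}
    (h : ∀ e, ∑ j, (M *ᵥ e) j * MvPolynomial.eval e (MvPolynomial.pderiv j Q) = 0)
    {S : Type*} [CommRing S] [Algebra ℝ S] (P : σ → S) :
    ∑ j, (M.map (algebraMap ℝ S) *ᵥ P) j * MvPolynomial.aeval P (MvPolynomial.pderiv j Q) = 0 := by
  have hzero : ∑ j, (M.map MvPolynomial.C *ᵥ MvPolynomial.X) j * MvPolynomial.pderiv j Q = 0 :=
    MvPolynomial.funext fun e => by simpa [mulVec, dotProduct, MvPolynomial.eval_sum] using h e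
  simpa [mulVec, dotProduct, map_sum] using congrArg (MvPolynomial.aeval P) hzero

namespace Takiff

variable {m d : ℕ}

noncomputable def toPoly {R : Type*} [CommSemiring R] :
    (Fin (m + 1) × Fin d → R) →ₗ[R] Fin d → R[X] where
  toFun F j := ∑ s : Fin (m + 1), monomial s (F (s, j))
  map_add' F G := by funext j; simp [Finset.sum_add_distrib]
  map_smul' c F := by funext j; simp [Finset.smul_sum, smul_monomial]

theorem coeff_toPoly {R : Type*} [CommSemiring R] (F : Fin (m + 1) × Fin d → R) (j : Fin d)
    (s : Fin (m + 1)) : (toPoly F j).coeff s = F (s, j) := by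
  simp [toPoly, finsetSum_coeff, coeff_monomial, Fin.val_inj]

theorem map_toPoly {R S : Type*} [CommSemiring R] [CommSemiring S] (f : R →+* S)
    (F : Fin (m + 1) × Fin d → R) (j : Fin d) : (toPoly F j).map f = toPoly (f ∘ F) j := by
  simp [toPoly, Polynomial.map_sum]

theorem coeff_zero_aeval_toPoly (P : MvPolynomial (Fin d) ℝ) (F : Fin (m + 1) × Fin d → ℝ) :
    (MvPolynomial.aeval (toPoly F) P).coeff 0 = MvPolynomial.eval (fun i => F (0, i)) P := by
  have h := AlgHom.congr_fun (MvPolynomial.comp_aeval (toPoly F) (aeval (0 : ℝ))) P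
  simp only [AlgHom.comp_apply, coe_aeval_eq_eval, ← coeff_zero_eq_eval_zero] at h
  rw [h, ← MvPolynomial.coe_aeval_eq_eval]
  exact congrArg (fun v => MvPolynomial.aeval v P) (funext fun i => coeff_toPoly F i 0)

noncomputable def invariantCoeff (Q : MvPolynomial (Fin d) ℝ) (K : ℕ)
    (F : Fin (m + 1) × Fin d → ℝ) : ℝ :=
  (MvPolynomial.aeval (toPoly F) Q).coeff K

theorem isPolynomialMap_invariantCoeff (Q : MvPolynomial (Fin d) ℝ) (K : ℕ) :
    IsPolynomialMap (invariantCoeff (m := m) Q K) := by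
  refine IsPolynomialMap.real_iff.2 ⟨(MvPolynomial.aeval (toPoly MvPolynomial.X) Q).coeff K,
    fun F => ?_⟩
  have h := congrArg (coeff · K) (AlgHom.congr_fun
    (MvPolynomial.comp_aeval (toPoly MvPolynomial.X) (mapAlgHom (MvPolynomial.aeval F))) Q)
  simp only [AlgHom.comp_apply, coe_mapAlgHom, coeff_map, map_toPoly, Function.comp_def,
    RingHom.coe_coe, MvPolynomial.aeval_X] at h
  rw [invariantCoeff, ← MvPolynomial.coe_aeval_eq_eval]
  exact h.symm

theorem deriv_invariantCoeff (Q : MvPolynomial (Fin d) ℝ) (K : ℕ)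
    (F A : Fin (m + 1) × Fin d → ℝ) :
    deriv (fun t : ℝ => invariantCoeff Q K (F + t • A)) 0 =
      (∑ j, toPoly A j * MvPolynomial.aeval (toPoly F) (MvPolynomial.pderiv j Q)).coeff K := by
  simpa only [invariantCoeff, map_add, map_smul] using
    deriv_coeff_aeval_add_smul Q (toPoly F) (toPoly A) K

section Representation

variable {g : Type*} [LieRing g] [LieAlgebra ℝ g] (ρ : g →ₗ⁅ℝ⁆ Module.End ℝ (Fin d → ℝ))

theorem takiffRepAct_apply (x : Fin (m + 1) → g) (F : Fin (m + 1) × Fin d → ℝ)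
    (k : Fin (m + 1)) (j : Fin d) :
    takiffRepAct ρ x F (k, j) = ∑ r with r ≤ k, ρ (x r) (F ∘ fun i => (k - r, i)) j := by
  simp only [takiffRepAct, Finset.sum_apply, ite_apply, Pi.zero_apply, Finset.sum_filter]
  rfl

noncomputable def takiffBilin :
    (Fin (m + 1) → g) →ₗ[ℝ] (Fin (m + 1) × Fin d → ℝ) →ₗ[ℝ] Fin (m + 1) × Fin d → ℝ :=
  LinearMap.mk₂ ℝ (takiffRepAct ρ)
    (fun x y F => by ext ⟨k, j⟩; simp [takiffRepAct_apply, Finset.sum_add_distrib])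
    (fun c x F => by ext ⟨k, j⟩; simp [takiffRepAct_apply, Finset.mul_sum])
    (fun x F G => by ext ⟨k, j⟩; simp [takiffRepAct_apply, Finset.sum_add_distrib, Pi.add_comp])
    (fun c x F => by ext ⟨k, j⟩; simp [takiffRepAct_apply, Finset.mul_sum, Pi.smul_comp])

theorem takiffRepAct_single (K : Fin (m + 1)) (y : g) (F : Fin (m + 1) × Fin d → ℝ)
    (k : Fin (m + 1)) (j : Fin d) :
    takiffRepAct ρ (Pi.single K y) F (k, j) =
      if K ≤ k then ρ y (F ∘ fun i => (k - K, i)) j else 0 := by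
  simp [takiffRepAct_apply, Pi.single_apply, apply_ite ρ, apply_ite DFunLike.coe, ite_apply,
    Finset.sum_ite_eq']

theorem X_pow_dvd_toPoly_takiffRepAct_sub (x : Fin (m + 1) → g) (F : Fin (m + 1) × Fin d → ℝ)
    (j : Fin d) :
    X ^ (m + 1) ∣ toPoly (takiffRepAct ρ x F) j -
      ∑ r : Fin (m + 1), X ^ (r : ℕ) * ((LinearMap.toMatrix' (ρ (x r))).map C *ᵥ toPoly F) j := by
  refine X_pow_dvd_iff.2 fun k hk => ?_
  lift k to Fin (m + 1) using hk
  rw [coeff_sub, sub_eq_zero, coeff_toPoly, finsetSum_coeff, takiffRepAct, Finset.sum_apply]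
  refine Finset.sum_congr rfl fun r _ => ?_
  rw [coeff_X_pow_mul', Matrix.coeff_map_C_mulVec, LinearMap.toMatrix'_mulVec]
  split_ifs with hrk
  · refine congrArg (fun v => ρ (x r) v j) (funext fun i => ?_)
    rw [← Fin.sub_val_of_le hrk, coeff_toPoly]
  · rfl

theorem deriv_invariantCoeff_takiffRepAct {Q : MvPolynomial (Fin d) ℝ}
    (hQ : ∀ (y : g) (e : Fin d → ℝ),
      ∑ j, ρ y e j * MvPolynomial.eval e (MvPolynomial.pderiv j Q) = 0)
    {K : ℕ} (hK : K ≤ m) (x : Fin (m + 1) → g) (F : Fin (m + 1) × Fin d → ℝ) :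
    deriv (fun t : ℝ => invariantCoeff Q K (F + t • takiffRepAct ρ x F)) 0 = 0 := by
  set G := fun j => MvPolynomial.aeval (toPoly F) (MvPolynomial.pderiv j Q)
  have hρ : ∀ r, ∑ j, ((LinearMap.toMatrix' (ρ (x r))).map C *ᵥ toPoly F) j * G j = 0 :=
    fun r => sum_mulVec_mul_aeval_pderiv_eq_zero
      (fun e => by simpa [LinearMap.toMatrix'_mulVec] using hQ (x r) e) (toPoly F)
  have hcorr : ∑ j, (∑ r : Fin (m + 1), X ^ (r : ℕ) *
      ((LinearMap.toMatrix' (ρ (x r))).map C *ᵥ toPoly F) j) * G j = 0 := by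
    simp_rw [Finset.sum_mul, mul_assoc]
    rw [Finset.sum_comm]
    simp [← Finset.mul_sum, hρ]
  have hdvd : X ^ (m + 1) ∣ ∑ j, toPoly (takiffRepAct ρ x F) j * G j := by
    rw [← sub_zero (∑ j, _), ← hcorr, ← Finset.sum_sub_distrib]
    simp_rw [← sub_mul]
    exact Finset.dvd_sum fun j _ =>
      dvd_mul_of_dvd_left (X_pow_dvd_toPoly_takiffRepAct_sub ρ x F j) (G j)
  rw [deriv_invariantCoeff]
  exact X_pow_dvd_iff.1 hdvd K (by omega)

theorem sum_sub_takiffRepAct_mul_eval_pderiv_eq_zero {Q : MvPolynomial (Fin d) ℝ}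
    (hQ : ∀ (y : g) (e : Fin d → ℝ),
      ∑ j, ρ y e j * MvPolynomial.eval e (MvPolynomial.pderiv j Q) = 0)
    (K : Fin (m + 1)) (A F : Fin (m + 1) × Fin d → ℝ) (x : Fin (m + 1) → g)
    (hA : deriv (fun t : ℝ => invariantCoeff Q K (F + t • A)) 0 = 0)
    (hrows : ∀ k < K, ∀ j, A (k, j) = takiffRepAct ρ x F (k, j)) :
    ∑ j, (A (K, j) - takiffRepAct ρ x F (K, j)) *
      MvPolynomial.eval (fun i => F (0, i)) (MvPolynomial.pderiv j Q) = 0 := by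
  set G := fun j => MvPolynomial.aeval (toPoly F) (MvPolynomial.pderiv j Q)
  set D := toPoly (A - takiffRepAct ρ x F)
  have hdvd : ∀ j, X ^ (K : ℕ) ∣ D j := fun j => X_pow_dvd_iff.2 fun k hk => by
    lift k to Fin (m + 1) using by omega
    simp [D, coeff_toPoly, hrows k hk j]
  choose D' hD' using hdvd
  have hsum : (∑ j, D j * G j).coeff K = 0 := by
    simp only [D, map_sub, Pi.sub_apply, sub_mul, Finset.sum_sub_distrib, coeff_sub]
    rw [← deriv_invariantCoeff, ← deriv_invariantCoeff, hA,
      deriv_invariantCoeff_takiffRepAct ρ hQ K.is_le x F, sub_zero]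
  -- `D = u^K D'`, so the `u^K`-coefficient of `∑ D_j G_j` is `∑ D'_j(0) G_j(0)`: row `K` of
  -- `A - ρ_m(x)F` paired with `∇Q(f_0)`.
  calc ∑ j, (A (K, j) - takiffRepAct ρ x F (K, j)) *
        MvPolynomial.eval (fun i => F (0, i)) (MvPolynomial.pderiv j Q)
      = (∑ j, D' j * G j).coeff 0 := by
        simp only [finsetSum_coeff, mul_coeff_zero, G, coeff_zero_aeval_toPoly]
        refine Finset.sum_congr rfl fun j _ => ?_
        rw [← coeff_X_pow_mul (D' j) K 0, ← hD' j, zero_add]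
        simp [D, coeff_toPoly]
    _ = (∑ j, D j * G j).coeff K := by
        simp [hD', mul_assoc, ← Finset.mul_sum, coeff_X_pow_mul']
    _ = 0 := hsum

theorem exists_extend_rows (hD : HasPolyDixmier fun x (v : Fin d → ℝ) => ρ x v)
    {κ : Type*} [Fintype κ] (π : Fin (m + 1) × Fin d → κ) (hπ : Function.Injective π)
    (a : (κ → ℝ) → Fin (m + 1) × Fin d → ℝ) (ha : IsPolynomialMap a)
    (hAnn : ∀ φ : (Fin (m + 1) × Fin d → ℝ) → ℝ, IsPolynomialMap φ →
      (∀ (x : Fin (m + 1) → g) (e : Fin (m + 1) × Fin d → ℝ),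
        deriv (fun t : ℝ => φ (e + t • takiffRepAct ρ x e)) 0 = 0) →
      ∀ z, deriv (fun t : ℝ => φ (z ∘ π + t • a z)) 0 = 0)
    (K : Fin (m + 1)) (B : (κ → ℝ) → Fin (m + 1) → g) (hB : IsPolynomialMap B)
    (hrows : ∀ k < K, ∀ z j, a z (k, j) = takiffRepAct ρ (B z) (z ∘ π) (k, j)) :
    ∃ B' : (κ → ℝ) → Fin (m + 1) → g, IsPolynomialMap B' ∧
      ∀ k ≤ K, ∀ z j, a z (k, j) = takiffRepAct ρ (B' z) (z ∘ π) (k, j) := by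
  set c : (κ → ℝ) → Fin d → ℝ := fun z j => a z (K, j) - takiffRepAct ρ (B z) (z ∘ π) (K, j)
  have hc : IsPolynomialMap c :=
    (ha.sub (hB.bilinear (IsPolynomialMap.of_linearMap (LinearMap.funLeft ℝ ℝ π))
      (takiffBilin ρ))).comp_linearMap (LinearMap.funLeft ℝ ℝ fun j => (K, j))
  have hann : ∀ φ : (Fin d → ℝ) → ℝ, IsPolynomialMap φ →
      (∀ (y : g) (e : Fin d → ℝ), deriv (fun t : ℝ => φ (e + t • ρ y e)) 0 = 0) →
      ∀ z, deriv (fun t : ℝ => φ (z ∘ (π ∘ fun i => (0, i)) + t • c z)) 0 = 0 := by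
    intro φ hφ hinv z
    obtain ⟨Q, hQ⟩ := IsPolynomialMap.real_iff.1 hφ
    obtain rfl : φ = fun e => MvPolynomial.eval e Q := funext hQ
    have hQinv : ∀ (y : g) (e : Fin d → ℝ),
        ∑ j, ρ y e j * MvPolynomial.eval e (MvPolynomial.pderiv j Q) = 0 := fun y e => by
      simpa [deriv_eval_add_smul] using hinv y e
    rw [deriv_eval_add_smul]
    exact sum_sub_takiffRepAct_mul_eval_pderiv_eq_zero ρ hQinv K (a z) (z ∘ π) (B z)
      (hAnn _ (isPolynomialMap_invariantCoeff Q K)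
        (fun x e => deriv_invariantCoeff_takiffRepAct ρ hQinv K.is_le x e) z)
      fun k hk j => hrows k hk z j
  obtain ⟨b, hb, hcb⟩ := hD.exists_of_injective (π ∘ fun i => (0, i))
    (hπ.comp (Prod.mk_right_injective 0)) c hc hann
  refine ⟨B + LinearMap.single ℝ (fun _ => g) K ∘ b,
    hB.add (hb.comp_linearMap (LinearMap.single ℝ (fun _ => g) K)), fun k hk z j => ?_⟩
  have hsplit := congrFun ((takiffBilin ρ).map_add₂ (B z) (Pi.single K (b z)) (z ∘ π)) (k, j)
  simp only [takiffBilin, LinearMap.mk₂_apply, Pi.add_apply] at hsplit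
  simp only [Pi.add_apply, Function.comp_apply, LinearMap.coe_single, hsplit,
    takiffRepAct_single]
  rcases hk.lt_or_eq with hk | rfl
  · rw [hrows k hk z j, if_neg (not_le.2 hk), add_zero]
  · rw [if_pos le_rfl, sub_self]
    exact eq_add_of_sub_eq' (congrFun (hcb z) j)

end Representation

end Takiff

open Takiff in
theorem takiff_dixmier_property_general {g : Type*} [LieRing g] [LieAlgebra ℝ g] {d : ℕ}
    (ρ : g →ₗ⁅ℝ⁆ Module.End ℝ (Fin d → ℝ))
    (hD : HasPolyDixmier fun x (v : Fin d → ℝ) => ρ x v) (m : ℕ) :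
    HasPolyDixmier (g := Fin (m + 1) → g) (takiffRepAct ρ (m := m)) := by
  intro w a ha hAnn
  have hrows : ∀ n ≤ m + 1, ∃ B : ((Fin w ⊕ Fin (m + 1) × Fin d) → ℝ) → Fin (m + 1) → g,
      IsPolynomialMap B ∧ ∀ k : Fin (m + 1), (k : ℕ) < n → ∀ z j,
        a z (k, j) = takiffRepAct ρ (B z) (z ∘ Sum.inr) (k, j) := by
    intro n
    induction n with
    | zero => exact fun _ => ⟨0, IsPolynomialMap.zero, fun k hk => absurd hk k.val.not_lt_zero⟩
    | succ n ih =>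
      intro hn
      obtain ⟨B, hB, hB_rows⟩ := ih (by omega)
      obtain ⟨B', hB', hB'_rows⟩ := exists_extend_rows ρ hD Sum.inr Sum.inr_injective a ha hAnn
        ⟨n, by omega⟩ B hB hB_rows
      exact ⟨B', hB', fun k hk => hB'_rows k (Nat.lt_succ_iff.1 hk)⟩
  obtain ⟨B, hB, hB_rows⟩ := hrows (m + 1) le_rfl
  exact ⟨B, hB, fun z => funext fun kj => hB_rows kj.1 kj.1.is_lt z kj.2⟩

/-- If the representation `(g, ρ, V)` has the polynomial Dixmier property, then so does
the Takiff representation `(g_m, ρ_m, V_m)` for every `m ≥ 0`. -/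
theorem takiff_dixmier_property {g : Type*} [LieRing g] [LieAlgebra ℝ g]
    [FiniteDimensional ℝ g] {d : ℕ}
    (ρ : g →ₗ⁅ℝ⁆ Module.End ℝ (Fin d → ℝ))
    (hD : HasPolyDixmier fun x (v : Fin d → ℝ) => ρ x v) (m : ℕ) :
    HasPolyDixmier (g := Fin (m + 1) → g) (takiffRepAct ρ (m := m)) :=
  takiff_dixmier_property_general ρ hD m
end
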